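/- Let p > 1, 0 < q < 1, and for M ≥ 1 let x^{(M)} be the sequence with x_j = 1 for 1 ≤ j ≤ M and x_j = 0 for j > M. Then for the operator A x (i) = ∑_{j=i}^∞ q^{j-i} x_j, one has lim_{M→∞} ( ∑_i (A x^{(M)}(i))^p / ∑_j (x^{(M)}_j)^p )^{1/p} = 1/(1-q). -/

import Mathlib

open Filter Finset Topology

/-! The `i`-th entry of `A x^{(M)}` is the geometric partial sum `∑_{d < M - i} q^d`. Reversing
the order of summation, the numerator becomes `∑_{j < M} s_j^p` with `s_j = ∑_{d ≤ j} q^d`, so the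
ratio is a Cesàro mean of `s_j^p → (1 - q)^{-p}`. -/

theorem tsum_mul_ite_add_le_eq_sum_range {R : Type*} [Semiring R] [TopologicalSpace R]
    (f : ℕ → R) (i M : ℕ) :
    ∑' d : ℕ, f d * (if i + 1 + d ≤ M then (1 : R) else 0) = ∑ d ∈ range (M - i), f d := by
  rw [tsum_eq_sum (s := range (M - i))]
  · refine sum_congr rfl fun d hd => ?_
    rw [if_pos (by rw [mem_range] at hd; omega), mul_one]
  · intro d hd
    rw [if_neg (by rw [mem_range] at hd; omega), mul_zero]

theorem tsum_comp_tsub_eq_sum_range {M : Type*} [AddCommMonoid M] [TopologicalSpace M]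
    {g : ℕ → M} (hg : g 0 = 0) (n : ℕ) :
    ∑' i : ℕ, g (n - i) = ∑ j ∈ range n, g (j + 1) := by
  rw [tsum_eq_sum (s := range n) fun i hi => by rw [mem_range, not_lt] at hi; simp [hg, hi],
    ← sum_range_reflect]
  refine sum_congr rfl fun i hi => ?_
  rw [mem_range] at hi
  congr 1
  omega

theorem tendsto_rpow_mean_of_tendsto {u : ℕ → ℝ} {L p : ℝ} (hL : 0 ≤ L) (hp : 0 < p)
    (hu : Tendsto u atTop (𝓝 L)) :
    Tendsto (fun n : ℕ => ((∑ j ∈ range n, u j ^ p) / n) ^ (1 / p)) atTop (𝓝 L) := by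
  have hmean := (hu.rpow_const (Or.inr hp.le)).cesaro.rpow_const (p := 1 / p)
    (Or.inr (by positivity))
  rw [one_div, Real.rpow_rpow_inv hL hp.ne'] at hmean
  exact hmean.congr fun n => by rw [one_div, div_eq_inv_mul]

/-- For the geometric Toeplitz operator `(A x)_i = ∑_{j ≥ i} q^{j-i} x_j` and the
truncated test sequences `x^{(M)}` (`x_j = 1` for `1 ≤ j ≤ M`, `0` otherwise;
here `j = i+1+d`), the ratio of `ℓ^p` norms tends to `1/(1-q)` as `M → ∞`. -/
theorem toeplitz_test_ratio_limit (q p : ℝ) (hq0 : 0 < q) (hq1 : q < 1) (hp : 1 < p) :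
    Tendsto
      (fun M : ℕ =>
        ((∑' i : ℕ, (∑' d : ℕ, q ^ d * (if i + 1 + d ≤ M then (1 : ℝ) else 0)) ^ p) /
            (M : ℝ)) ^ (1 / p))
      atTop (nhds ((1 - q)⁻¹)) := by
  have hp0 : 0 < p := by linarith
  have hgeom : Tendsto (fun j : ℕ => ∑ d ∈ range (j + 1), q ^ d) atTop (𝓝 (1 - q)⁻¹) :=
    (hasSum_geometric_of_lt_one hq0.le hq1).tendsto_sum_nat.comp (tendsto_add_atTop_nat 1)
  refine (tendsto_rpow_mean_of_tendsto (inv_nonneg.2 (sub_nonneg.2 hq1.le)) hp0 hgeom).congr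
    fun M => ?_
  simp_rw [tsum_mul_ite_add_le_eq_sum_range]
  rw [tsum_comp_tsub_eq_sum_range (g := fun n => (∑ d ∈ range n, q ^ d) ^ p)
    (by simp [Real.zero_rpow hp0.ne'])]
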